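/- Let P be a model on (X, A), q : X → [0,∞) integrable with respect to every P ∈ P, and P_q := {P_q : P ∈ P, ∫ q dP > 0} with P_q(A) := (∫_A q dP)/(∫ q dP). If C is complete and sufficient for P, then C is complete and sufficient for P_q. -/

import Mathlib

/-!
Sufficiency gives, for every measurable `A`, one `C`-measurable version of `P[1_A|C]` valid for
all `P ∈ M`. By linearity this extends to simple functions, and by monotone convergence for
conditional expectations to every nonnegative function integrable under the whole model; let
`g_q` and `g_A` be such common versions for `q` and `q 1_A`.

Under `P_q` the conditional probability of `A` given `C` is `g_A / g_q` (Bayes' formula), which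
does not depend on `P`. If `h` is `C`-measurable with `∫ h dP_q = 0` for all `P_q`, then
`∫ h g_q dP = ∫ h q dP = 0` for all `P ∈ M`, so `h g_q = 0` `P`-a.s. by completeness; as
`P[q|C] > 0` `P`-a.s. on `{q > 0}`, this gives `h = 0` `P_q`-a.s.
-/

open MeasureTheory

/-- A sub-σ-algebra `C` of `mX` is (Lehmann–Scheffé) complete for the model `M`:
every `C`-measurable real function, integrable with respect to every member of `M`
and with expectation `0` under every member, vanishes `P`-a.s. for every `P ∈ M`. -/
def IsLSComplete {X : Type*} (mX : MeasurableSpace X) (C : MeasurableSpace X)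
    (M : Set (@Measure X mX)) : Prop :=
  ∀ h : X → ℝ, Measurable[C] h → (∀ P ∈ M, Integrable h P) →
    (∀ P ∈ M, ∫ x, h x ∂P = 0) → ∀ P ∈ M, h =ᵐ[P] 0

/-- A sub-σ-algebra `C` of `mX` is sufficient for the model `M`: for every
`mX`-measurable set `A` there is a single `C`-measurable version of the conditional
probability of `A` given `C`, valid simultaneously for all `P ∈ M`. -/
def IsLSSufficient {X : Type*} (mX : MeasurableSpace X) (C : MeasurableSpace X)
    (M : Set (@Measure X mX)) : Prop :=
  ∀ A : Set X, MeasurableSet[mX] A →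
    ∃ g : X → ℝ, Measurable[C] g ∧
      ∀ P ∈ M, ∀ s : Set X, MeasurableSet[C] s →
        ∫ x in s, g x ∂P = (P (s ∩ A)).toReal

/-- The `q`-weighted version `P_q` of `P`, with `P_q(A) = (∫_A q dP)/(∫ q dP)`. -/
noncomputable def weightedMeasure {X : Type*} [mX : MeasurableSpace X] (P : Measure X)
    (q : X → ℝ) : Measure X :=
  (∫⁻ x, ENNReal.ofReal (q x) ∂P)⁻¹ • P.withDensity (fun x => ENNReal.ofReal (q x))

/-- The `q`-weighted model `M_q = {P_q : P ∈ M, ∫ q dP > 0}`. -/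
def weightedModel {X : Type*} [mX : MeasurableSpace X] (M : Set (Measure X))
    (q : X → ℝ) : Set (Measure X) :=
  {ν | ∃ P ∈ M, (0 < ∫ x, q x ∂P) ∧ ν = weightedMeasure P q}

open Filter Topology
open scoped ENNReal

section CondExp

variable {X : Type*} {m m₀ : MeasurableSpace X} {μ : Measure X}

theorem ae_eq_condExp_of_forall_setIntegral_eq_of_measurable (hm : m ≤ m₀)
    [IsFiniteMeasure μ] {f g : X → ℝ} (hf : Integrable f μ) (hg : Measurable[m] g)
    (hg_eq : ∀ s, MeasurableSet[m] s → ∫ x in s, g x ∂μ = ∫ x in s, f x ∂μ) :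
    g =ᵐ[μ] μ[f|m] := by
  -- On `{|g| ≤ n}` the function `g` is bounded, hence integrable, and uniqueness applies there.
  set s : ℕ → Set X := fun n => {x | |g x| ≤ n}
  have hs : ∀ n, MeasurableSet[m] (s n) := fun n =>
    (continuous_abs.measurable.comp hg) measurableSet_Iic
  have hg_int : ∀ n, Integrable ((s n).indicator g) μ := fun n =>
    .of_bound ((hg.indicator (hs n)).mono hm le_rfl).aestronglyMeasurable n
      (ae_of_all _ fun x => by
        by_cases hx : x ∈ s n
        · simpa [Set.indicator_of_mem hx] using (show |g x| ≤ n from hx)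
        · simp [Set.indicator_of_notMem hx])
  have h_eq : ∀ n, (s n).indicator g =ᵐ[μ] (s n).indicator (μ[f|m]) := fun n =>
    (ae_eq_condExp_of_forall_setIntegral_eq hm (hf.indicator (hm _ (hs n)))
      (fun _ _ _ => (hg_int n).integrableOn)
      (fun t ht _ => by
        rw [setIntegral_indicator (hm _ (hs n)), setIntegral_indicator (hm _ (hs n)),
          hg_eq _ (ht.inter (hs n))])
      ((hg.indicator (hs n)).stronglyMeasurable.aestronglyMeasurable)).trans
    (condExp_indicator hf (hs n))
  filter_upwards [ae_all_iff.2 h_eq] with x hx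
  obtain ⟨n, hn⟩ := exists_nat_ge |g x|
  simpa [Set.indicator_of_mem (show x ∈ s n from hn)] using hx n

theorem ae_eq_zero_of_condExp_eq_zero (hm : m ≤ m₀) [SigmaFinite (μ.trim hm)] {f : X → ℝ}
    (hf : Integrable f μ) (hf₀ : 0 ≤ᵐ[μ] f) : ∀ᵐ x ∂μ, μ[f|m] x = 0 → f x = 0 := by
  set S := {x | μ[f|m] x = 0}
  have hS : MeasurableSet[m] S := stronglyMeasurable_condExp.measurable (measurableSet_singleton 0)
  have h_int : ∫ x in S, f x ∂μ = 0 := by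
    rw [← setIntegral_condExp hm hf hS]
    exact setIntegral_eq_zero_of_forall_eq_zero fun x hx => hx
  have := (setIntegral_eq_zero_iff_of_nonneg_ae (ae_restrict_of_ae hf₀) hf.integrableOn).1 h_int
  exact (ae_restrict_iff' (hm _ hS)).1 this

theorem ae_tendsto_condExp_of_monotone (hm : m ≤ m₀) [SigmaFinite (μ.trim hm)]
    {f : ℕ → X → ℝ} {F : X → ℝ} (hf : ∀ n, Integrable (f n) μ) (hF : Integrable F μ)
    (h_mono : ∀ᵐ x ∂μ, Monotone fun n => f n x)
    (h_tendsto : ∀ᵐ x ∂μ, Tendsto (fun n => f n x) atTop (𝓝 (F x))) :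
    ∀ᵐ x ∂μ, Tendsto (fun n => μ[f n|m] x) atTop (𝓝 (μ[F|m] x)) := by
  have hc_mono : ∀ᵐ x ∂μ, Monotone fun n => μ[f n|m] x := by
    have := ae_all_iff.2 fun n => condExp_mono (m := m) (hf n) (hf (n + 1))
      (h_mono.mono fun x hx => hx n.le_succ)
    filter_upwards [this] with x hx using monotone_nat_of_le_succ hx
  have hc_le : ∀ᵐ x ∂μ, ∀ n, μ[f n|m] x ≤ μ[F|m] x := by
    refine ae_all_iff.2 fun n => condExp_mono (hf n) hF ?_
    filter_upwards [h_mono, h_tendsto] with x hx hx' using hx.ge_of_tendsto hx' n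
  set L : X → ℝ := fun x => ⨆ n, μ[f n|m] x
  have hL_tendsto : ∀ᵐ x ∂μ, Tendsto (fun n => μ[f n|m] x) atTop (𝓝 (L x)) := by
    filter_upwards [hc_mono, hc_le] with x hx hx'
    exact tendsto_atTop_ciSup hx ⟨_, Set.forall_mem_range.2 hx'⟩
  have hL_meas : Measurable[m] L := Measurable.iSup fun n => stronglyMeasurable_condExp.measurable
  have hL_int : Integrable L μ := by
    refine Integrable.mono' ((integrable_condExp (m := m) (μ := μ) (f := f 0)).norm.add
      (integrable_condExp (m := m) (μ := μ) (f := F)).norm)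
      (hL_meas.mono hm le_rfl).aestronglyMeasurable ?_
    filter_upwards [hc_mono, hc_le, hL_tendsto] with x hx hx' hxL
    have h₀ : μ[f 0|m] x ≤ L x := hx.ge_of_tendsto hxL 0
    have h₁ : L x ≤ μ[F|m] x := le_of_tendsto' hxL hx'
    exact (abs_le_max_abs_abs h₀ h₁).trans (max_le_add_of_nonneg (abs_nonneg _) (abs_nonneg _))
  have hL_eq : L =ᵐ[μ] μ[F|m] := by
    refine ae_eq_condExp_of_forall_setIntegral_eq hm hF (fun _ _ _ => hL_int.integrableOn)
      (fun s hs _ => ?_) hL_meas.stronglyMeasurable.aestronglyMeasurable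
    have h_lim_L : Tendsto (fun n => ∫ x in s, μ[f n|m] x ∂μ) atTop (𝓝 (∫ x in s, L x ∂μ)) :=
      integral_tendsto_of_tendsto_of_monotone (fun n => integrable_condExp.integrableOn)
        hL_int.integrableOn (ae_restrict_of_ae hc_mono) (ae_restrict_of_ae hL_tendsto)
    have h_lim_F : Tendsto (fun n => ∫ x in s, f n x ∂μ) atTop (𝓝 (∫ x in s, F x ∂μ)) :=
      integral_tendsto_of_tendsto_of_monotone (fun n => (hf n).integrableOn)
        hF.integrableOn (ae_restrict_of_ae h_mono) (ae_restrict_of_ae h_tendsto)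
    simp_rw [setIntegral_condExp hm (hf _) hs] at h_lim_L
    exact tendsto_nhds_unique h_lim_L h_lim_F
  filter_upwards [hL_tendsto, hL_eq] with x hx hx' using hx'.symm ▸ hx

end CondExp

theorem SimpleFunc.exists_monotone_tendsto_of_nonneg {X : Type*} [MeasurableSpace X]
    {f : X → ℝ} (hf : Measurable f) (hf₀ : ∀ x, 0 ≤ f x) :
    ∃ u : ℕ → SimpleFunc X ℝ, Monotone (fun n => ⇑(u n)) ∧
      ∀ x, Tendsto (fun n => u n x) atTop (𝓝 (f x)) := by
  set f' : X → ℝ≥0∞ := fun x => ENNReal.ofReal (f x)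
  refine ⟨fun n => (SimpleFunc.eapprox f' n).map ENNReal.toReal, fun n k hnk x => ?_, fun x => ?_⟩
  · exact ENNReal.toReal_mono (SimpleFunc.eapprox_lt_top f' k x).ne
      (SimpleFunc.monotone_eapprox f' hnk x)
  · have := (ENNReal.tendsto_toReal ENNReal.ofReal_ne_top).comp
      (SimpleFunc.tendsto_eapprox hf.ennreal_ofReal x)
    rwa [ENNReal.toReal_ofReal (hf₀ x)] at this

section WeightedMeasure

variable {X : Type*} {mX : MeasurableSpace X} {P : Measure X} {q : X → ℝ}

theorem setIntegral_weightedMeasure (hq : Measurable q) (hq₀ : ∀ x, 0 ≤ q x)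
    (hq_int : Integrable q P) {s : Set X} (hs : MeasurableSet s) (u : X → ℝ) :
    ∫ x in s, u x ∂weightedMeasure P q = (∫ x, q x ∂P)⁻¹ * ∫ x in s, q x * u x ∂P := by
  rw [weightedMeasure, Measure.restrict_smul, integral_smul_measure, restrict_withDensity hs,
    integral_withDensity_eq_integral_toReal_smul hq.ennreal_ofReal
      (ae_of_all _ fun _ => ENNReal.ofReal_lt_top),
    ← ofReal_integral_eq_lintegral_ofReal hq_int (ae_of_all _ hq₀), ENNReal.toReal_inv,
    ENNReal.toReal_ofReal (integral_nonneg hq₀)]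
  simp_rw [ENNReal.toReal_ofReal (hq₀ _), smul_eq_mul]

theorem toReal_weightedMeasure_apply (hq : Measurable q) (hq₀ : ∀ x, 0 ≤ q x)
    (hq_int : Integrable q P) {s : Set X} (hs : MeasurableSet s) :
    (weightedMeasure P q s).toReal = (∫ x, q x ∂P)⁻¹ * ∫ x in s, q x ∂P := by
  simpa [measureReal_def] using setIntegral_weightedMeasure hq hq₀ hq_int hs 1

theorem integrable_mul_of_integrable_weightedMeasure (hq : Measurable q) (hq₀ : ∀ x, 0 ≤ q x)
    (hq_int : Integrable q P) (hpos : 0 < ∫ x, q x ∂P) {u : X → ℝ}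
    (hu : Integrable u (weightedMeasure P q)) : Integrable (q * u) P := by
  rw [weightedMeasure, ← ofReal_integral_eq_lintegral_ofReal hq_int (ae_of_all _ hq₀),
    integrable_smul_measure (ENNReal.inv_ne_zero.2 ENNReal.ofReal_ne_top)
      (ENNReal.inv_ne_top.2 (ENNReal.ofReal_pos.2 hpos).ne'),
    integrable_withDensity_iff_integrable_smul' hq.ennreal_ofReal
      (ae_of_all _ fun _ => ENNReal.ofReal_lt_top)] at hu
  simp only [ENNReal.toReal_ofReal (hq₀ _), smul_eq_mul] at hu
  exact hu

theorem ae_weightedMeasure_of_ae {p : X → Prop} (hq : Measurable q)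
    (h : ∀ᵐ x ∂P, 0 < q x → p x) : ∀ᵐ x ∂weightedMeasure P q, p x :=
  Measure.ae_smul_measure ((ae_withDensity_iff hq.ennreal_ofReal).2
    (h.mono fun _ hx hne => hx (ENNReal.ofReal_pos.1 (pos_iff_ne_zero.2 hne)))) _

end WeightedMeasure

def IsCommonCondExp {X : Type*} {mX : MeasurableSpace X} (C : MeasurableSpace X)
    (M : Set (@Measure X mX)) (f g : X → ℝ) : Prop :=
  Measurable[C] g ∧ ∀ P ∈ M, g =ᵐ[P] P[f|C]

section Model

variable {X : Type*} {C : MeasurableSpace X} {mX : MeasurableSpace X} {M : Set (Measure X)}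
  {q : X → ℝ}

theorem IsCommonCondExp.add {f₁ f₂ g₁ g₂ : X → ℝ} (hf₁ : ∀ P ∈ M, Integrable f₁ P)
    (hf₂ : ∀ P ∈ M, Integrable f₂ P) (h₁ : IsCommonCondExp C M f₁ g₁)
    (h₂ : IsCommonCondExp C M f₂ g₂) : IsCommonCondExp C M (f₁ + f₂) (g₁ + g₂) :=
  ⟨h₁.1.add h₂.1, fun P hP =>
    ((h₁.2 P hP).add (h₂.2 P hP)).trans (condExp_add (hf₁ P hP) (hf₂ P hP) C).symm⟩

theorem IsCommonCondExp.const_smul {f g : X → ℝ} (c : ℝ) (h : IsCommonCondExp C M f g) :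
    IsCommonCondExp C M (c • f) (c • g) :=
  ⟨h.1.const_smul c, fun P hP => ((h.2 P hP).const_smul c).trans (condExp_smul c f C).symm⟩

theorem IsLSSufficient.exists_isCommonCondExp_indicator (hle : C ≤ mX)
    (hfin : ∀ P ∈ M, IsFiniteMeasure P) (hsuff : IsLSSufficient mX C M) {A : Set X}
    (hA : MeasurableSet A) : ∃ g, IsCommonCondExp C M (A.indicator 1) g := by
  obtain ⟨g, hg, hg_eq⟩ := hsuff A hA
  refine ⟨g, hg, fun P hP => ?_⟩
  have := hfin P hP
  refine ae_eq_condExp_of_forall_setIntegral_eq_of_measurable hle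
    ((integrable_const 1).indicator hA) hg fun s hs => ?_
  rw [hg_eq P hP s hs, integral_indicator_one hA, measureReal_restrict_apply hA, Set.inter_comm,
    measureReal_def]

theorem IsLSSufficient.exists_isCommonCondExp_simpleFunc (hle : C ≤ mX)
    (hfin : ∀ P ∈ M, IsFiniteMeasure P) (hsuff : IsLSSufficient mX C M) (u : SimpleFunc X ℝ) :
    ∃ g, IsCommonCondExp C M u g := by
  induction u using SimpleFunc.induction with
  | @const c s hs =>
    obtain ⟨g, hg⟩ := hsuff.exists_isCommonCondExp_indicator hle hfin hs
    refine ⟨c • g, ?_⟩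
    convert hg.const_smul c using 1
    ext x
    by_cases hx : x ∈ s <;> simp [hx]
  | @add u v _ hu hv =>
    obtain ⟨gu, hgu⟩ := hu
    obtain ⟨gv, hgv⟩ := hv
    have hint (w : SimpleFunc X ℝ) (P : Measure X) (hP : P ∈ M) : Integrable w P :=
      have := hfin P hP; w.integrable_of_isFiniteMeasure
    exact ⟨gu + gv, by simpa using hgu.add (hint u) (hint v) hgv⟩

theorem IsCommonCondExp.limsup_of_monotone (hle : C ≤ mX) (hfin : ∀ P ∈ M, IsFiniteMeasure P)
    {f g : ℕ → X → ℝ} {F : X → ℝ} (hf : ∀ n, ∀ P ∈ M, Integrable (f n) P)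
    (hF : ∀ P ∈ M, Integrable F P) (h_mono : Monotone f)
    (h_tendsto : ∀ x, Tendsto (fun n => f n x) atTop (𝓝 (F x)))
    (hg : ∀ n, IsCommonCondExp C M (f n) (g n)) :
    IsCommonCondExp C M F fun x => limsup (fun n => g n x) atTop := by
  -- `limsup` is a `C`-measurable function defined everywhere; `g n` converges only off a
  -- `P`-null set that depends on `P`.
  refine ⟨Measurable.limsup fun n => (hg n).1, fun P hP => ?_⟩
  have := hfin P hP
  have hc_tendsto : ∀ᵐ x ∂P, Tendsto (fun n => P[f n|C] x) atTop (𝓝 (P[F|C] x)) :=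
    ae_tendsto_condExp_of_monotone hle (fun n => hf n P hP) (hF P hP)
      (ae_of_all _ fun x _ _ hnm => h_mono hnm x) (ae_of_all _ h_tendsto)
  filter_upwards [ae_all_iff.2 fun n => (hg n).2 P hP, hc_tendsto] with x hx hx'
  simp only [hx]
  exact hx'.limsup_eq

theorem IsLSSufficient.exists_isCommonCondExp (hle : C ≤ mX)
    (hfin : ∀ P ∈ M, IsFiniteMeasure P) (hsuff : IsLSSufficient mX C M) {f : X → ℝ}
    (hf : Measurable f) (hf₀ : ∀ x, 0 ≤ f x) (hf_int : ∀ P ∈ M, Integrable f P) :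
    ∃ g, IsCommonCondExp C M f g := by
  obtain ⟨u, hu_mono, hu_tendsto⟩ := SimpleFunc.exists_monotone_tendsto_of_nonneg hf hf₀
  choose g hg using fun n => hsuff.exists_isCommonCondExp_simpleFunc hle hfin (u n)
  have hu_int (n : ℕ) (P : Measure X) (hP : P ∈ M) : Integrable (u n) P :=
    have := hfin P hP; (u n).integrable_of_isFiniteMeasure
  exact ⟨_, .limsup_of_monotone hle hfin hu_int hf_int hu_mono hu_tendsto hg⟩

theorem setIntegral_weightedMeasure_eq_condExp {P : Measure X} (hle : C ≤ mX)
    [SigmaFinite (P.trim hle)] (hq : Measurable q) (hq₀ : ∀ x, 0 ≤ q x) (hq_int : Integrable q P)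
    {u : X → ℝ} (hu : Measurable[C] u) (hqu : Integrable (q * u) P) {s : Set X}
    (hs : MeasurableSet[C] s) :
    ∫ x in s, u x ∂weightedMeasure P q = (∫ x, q x ∂P)⁻¹ * ∫ x in s, (P[q|C] * u) x ∂P := by
  rw [setIntegral_weightedMeasure hq hq₀ hq_int (hle s hs)]
  exact congrArg _ ((setIntegral_condExp hle hqu hs).symm.trans (integral_congr_ae
    (ae_restrict_of_ae (condExp_mul_of_stronglyMeasurable_right hu.stronglyMeasurable hqu hq_int))))

-- `gq * h` is a version of `P[q * h|C]`, so its `P`-mean is `(∫ q dP) * ∫ h dP_q`.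
theorem IsCommonCondExp.integral_mul_eq_zero (hle : C ≤ mX) (hfin : ∀ P ∈ M, IsFiniteMeasure P)
    (hq : Measurable q) (hq₀ : ∀ x, 0 ≤ q x) (hq_int : ∀ P ∈ M, Integrable q P) {gq h : X → ℝ}
    (hgq : IsCommonCondExp C M q gq) (hh : Measurable[C] h)
    (h_int : ∀ ν ∈ weightedModel M q, Integrable h ν)
    (h_zero : ∀ ν ∈ weightedModel M q, ∫ x, h x ∂ν = 0) (P : Measure X) (hP : P ∈ M) :
    Integrable (gq * h) P ∧ ∫ x, (gq * h) x ∂P = 0 := by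
  have := hfin P hP
  rcases (integral_nonneg hq₀ : 0 ≤ ∫ x, q x ∂P).eq_or_lt with hq_zero | hpos
  · have hq_ae : q =ᵐ[P] 0 := (integral_eq_zero_iff_of_nonneg hq₀ (hq_int P hP)).1 hq_zero.symm
    have hgq_ae : gq =ᵐ[P] 0 := by simpa using (hgq.2 P hP).trans (condExp_congr_ae hq_ae)
    have : gq * h =ᵐ[P] 0 := by
      filter_upwards [hgq_ae] with x hx
      simp [hx]
    exact ⟨(integrable_zero _ _ _).congr this.symm, integral_eq_zero_of_ae this⟩
  · have hmem : weightedMeasure P q ∈ weightedModel M q := ⟨P, hP, hpos, rfl⟩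
    have hqh := integrable_mul_of_integrable_weightedMeasure hq hq₀ (hq_int P hP) hpos
      (h_int _ hmem)
    have h_pull := condExp_mul_of_stronglyMeasurable_right hh.stronglyMeasurable hqh (hq_int P hP)
    have h_gq : gq * h =ᵐ[P] P[q|C] * h := (hgq.2 P hP).mul (ae_eq_refl h)
    have h_mean := h_zero _ hmem
    rw [← setIntegral_univ, setIntegral_weightedMeasure_eq_condExp hle hq hq₀ (hq_int P hP) hh
      hqh .univ, setIntegral_univ] at h_mean
    refine ⟨(integrable_condExp.congr h_pull).congr h_gq.symm, ?_⟩
    rw [integral_congr_ae h_gq]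
    exact (mul_eq_zero.1 h_mean).resolve_left (inv_ne_zero hpos.ne')

theorem IsLSComplete.weighted (hle : C ≤ mX) (hfin : ∀ P ∈ M, IsFiniteMeasure P)
    (hq : Measurable q) (hq₀ : ∀ x, 0 ≤ q x) (hq_int : ∀ P ∈ M, Integrable q P)
    (hsuff : IsLSSufficient mX C M) (hcompl : IsLSComplete mX C M) :
    IsLSComplete mX C (weightedModel M q) := by
  intro h hh h_int h_zero
  obtain ⟨gq, hgq⟩ := hsuff.exists_isCommonCondExp hle hfin hq hq₀ hq_int
  have h_mean := hgq.integral_mul_eq_zero hle hfin hq hq₀ hq_int hh h_int h_zero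
  have h_gq_mul := hcompl _ (hgq.1.mul hh) (fun P hP => (h_mean P hP).1)
    (fun P hP => (h_mean P hP).2)
  rintro _ ⟨P, hP, -, rfl⟩
  have := hfin P hP
  refine ae_weightedMeasure_of_ae hq ?_
  filter_upwards [h_gq_mul P hP, hgq.2 P hP,
    ae_eq_zero_of_condExp_eq_zero hle (hq_int P hP) (ae_of_all _ hq₀)] with x hx hx_gq hx_supp hqx
  refine (mul_eq_zero.1 hx).resolve_left fun h_gq_zero => hqx.ne' (hx_supp ?_)
  rwa [← hx_gq]

theorem IsLSSufficient.weighted (hle : C ≤ mX) (hfin : ∀ P ∈ M, IsFiniteMeasure P)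
    (hq : Measurable q) (hq₀ : ∀ x, 0 ≤ q x) (hq_int : ∀ P ∈ M, Integrable q P)
    (hsuff : IsLSSufficient mX C M) : IsLSSufficient mX C (weightedModel M q) := by
  intro A hA
  obtain ⟨gq, hgq_meas, hgq⟩ := hsuff.exists_isCommonCondExp hle hfin hq hq₀ hq_int
  obtain ⟨gA, hgA_meas, hgA⟩ := hsuff.exists_isCommonCondExp hle hfin (hq.indicator hA)
    (Set.indicator_nonneg fun x _ => hq₀ x) fun P hP => (hq_int P hP).indicator hA
  refine ⟨gA / gq, hgA_meas.div hgq_meas, ?_⟩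
  rintro _ ⟨P, hP, -, rfl⟩ s hs
  have := hfin P hP
  have h_le : ∀ᵐ x ∂P, 0 ≤ gA x ∧ gA x ≤ gq x := by
    filter_upwards [hgq P hP, hgA P hP,
      condExp_nonneg (m := C) (ae_of_all P (Set.indicator_nonneg fun x _ => hq₀ x)),
      condExp_mono (m := C) ((hq_int P hP).indicator hA) (hq_int P hP)
        (ae_of_all _ (Set.indicator_le_self' fun x _ => hq₀ x))] with x e_q e_A h₀ h₁
    rw [e_q, e_A]
    exact ⟨h₀, h₁⟩
  -- Where `gq = 0` also `gA = 0`, so the junk value `gA / gq = 0` is harmless there.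
  have h_ratio : ∀ᵐ x ∂P, P[q|C] x * (gA / gq) x = gA x := by
    filter_upwards [h_le, hgq P hP] with x ⟨h₀, h₁⟩ e_q
    exact e_q ▸ mul_div_cancel_of_imp' fun h => le_antisymm (h ▸ h₁) h₀
  have h_bdd : ∀ᵐ x ∂P, ‖(gA / gq) x‖ ≤ 1 := by
    filter_upwards [h_le] with x ⟨h₀, h₁⟩
    rw [Pi.div_apply, Real.norm_of_nonneg (div_nonneg h₀ (h₀.trans h₁))]
    exact div_le_one_of_le₀ h₁ (h₀.trans h₁)
  have h_int : Integrable (q * (gA / gq)) P :=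
    (hq_int P hP).mul_bdd ((hgA_meas.div hgq_meas).mono hle le_rfl).aestronglyMeasurable h_bdd
  calc ∫ x in s, (gA / gq) x ∂weightedMeasure P q
      = (∫ x, q x ∂P)⁻¹ * ∫ x in s, (P[q|C] * (gA / gq)) x ∂P :=
        setIntegral_weightedMeasure_eq_condExp hle hq hq₀ (hq_int P hP) (hgA_meas.div hgq_meas)
          h_int hs
    _ = (∫ x, q x ∂P)⁻¹ * ∫ x in s, P[A.indicator q|C] x ∂P := by
        refine congrArg _ (integral_congr_ae (ae_restrict_of_ae ?_))
        filter_upwards [h_ratio, hgA P hP] with x e_ratio e_A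
        rw [← e_A, ← e_ratio]
        rfl
    _ = (weightedMeasure P q (s ∩ A)).toReal := by
        rw [setIntegral_condExp hle ((hq_int P hP).indicator hA) hs, setIntegral_indicator hA,
          toReal_weightedMeasure_apply hq hq₀ (hq_int P hP) ((hle s hs).inter hA)]

end Model

/-- **Lemma (Smith, 1957; permanence of complete sufficiency under weighing).**
If `C` is complete and sufficient for `M`, then `C` is complete and sufficient for the
weighted model `M_q`. -/
theorem complete_sufficient_of_weighted
    {X : Type*} [mX : MeasurableSpace X] (M : Set (Measure X))
    (hprob : ∀ P ∈ M, IsProbabilityMeasure P)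
    (q : X → ℝ) (hqmeas : Measurable q) (hq0 : ∀ x, 0 ≤ q x)
    (hqint : ∀ P ∈ M, Integrable q P)
    (C : MeasurableSpace X) (hle : C ≤ mX)
    (hcompl : IsLSComplete mX C M) (hsuff : IsLSSufficient mX C M) :
    IsLSComplete mX C (weightedModel (mX := mX) M q) ∧
      IsLSSufficient mX C (weightedModel (mX := mX) M q) := by
  have hfin : ∀ P ∈ M, @IsFiniteMeasure X mX P := fun P hP => have := hprob P hP; inferInstance
  exact ⟨hcompl.weighted hle hfin hqmeas hq0 hqint hsuff,
    hsuff.weighted hle hfin hqmeas hq0 hqint⟩
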